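/- arXiv:2411.01358 — 2 statements merged into one kernel-verified Lean document; each statement's English description precedes it below -/
import Mathlib

section
/- Let J be a finite index set. Fix a value x_i ∈ ℝ and, for each j ∈ J, values x_j, x_j^sym ∈ ℝ and positive distances r_j, r_j^sym > 0. Define the jump terms T_j = (x_j − x_i)/r_j + (x_j^sym − x_i)/r_j^sym and the mean terms M_j = |x_j − x_i|/r_j + |x_j^sym − x_i|/r_j^sym, and fix a real exponent q > 0. Define the shock detector α by α = ( |Σ_{j∈J} T_j| / (Σ_{j∈J} M_j) )^q if Σ_{j∈J} M_j ≠ 0 and α = 0 otherwise. If x_i is an extreme value, i.e. either x_j ≤ x_i and x_j^sym ≤ x_i for all j ∈ J (local maximum) or x_j ≥ x_i and x_j^sym ≥ x_i for all j ∈ J (local minimum), and if Σ_{j∈J} M_j ≠ 0, then α = 1. -/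
/-- Lemma 2.1 (second part): at a local extremum the shock detector equals `1`. -/
theorem shock_detector_eq_one_at_extremum
    {J : Type*} [Fintype J]
    (xi : ℝ) (x xsym r rsym : J → ℝ)
    (hr : ∀ j, 0 < r j) (hrsym : ∀ j, 0 < rsym j)
    (q : ℝ) (hq : 0 < q)
    (T M : J → ℝ)
    (hT : ∀ j, T j = (x j - xi) / r j + (xsym j - xi) / rsym j)
    (hM : ∀ j, M j = |x j - xi| / r j + |xsym j - xi| / rsym j)
    (α : ℝ)
    (hα : α = if (∑ j, M j) ≠ 0 then (|∑ j, T j| / (∑ j, M j)) ^ q else 0)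
    (hext : (∀ j, x j ≤ xi ∧ xsym j ≤ xi) ∨ (∀ j, xi ≤ x j ∧ xi ≤ xsym j))
    (hMne : (∑ j, M j) ≠ 0) :
    α = 1 := by
  have habs : |∑ j, T j| = ∑ j, M j := by
    rcases hext with h | h
    · have hTM : ∀ j, T j = -(M j) := by
        intro j
        have h1 := (h j).1
        have h2 := (h j).2
        rw [hT j, hM j, abs_of_nonpos (by linarith), abs_of_nonpos (by linarith)]
        ring
      have : (∑ j, T j) = -(∑ j, M j) := by
        rw [← Finset.sum_neg_distrib]
        exact Finset.sum_congr rfl fun j _ => hTM j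
      rw [this, abs_neg]
      have hMnn : 0 ≤ ∑ j, M j := Finset.sum_nonneg fun j _ => by
        rw [hM j]
        exact add_nonneg (div_nonneg (abs_nonneg _) (hr j).le)
          (div_nonneg (abs_nonneg _) (hrsym j).le)
      exact abs_of_nonneg hMnn
    · have hTM : ∀ j, T j = M j := by
        intro j
        have h1 := (h j).1
        have h2 := (h j).2
        rw [hT j, hM j, abs_of_nonneg (by linarith), abs_of_nonneg (by linarith)]
      have : (∑ j, T j) = ∑ j, M j := Finset.sum_congr rfl fun j _ => hTM j
      rw [this]
      have hMnn : 0 ≤ ∑ j, M j := Finset.sum_nonneg fun j _ => by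
        rw [hM j]
        exact add_nonneg (div_nonneg (abs_nonneg _) (hr j).le)
          (div_nonneg (abs_nonneg _) (hrsym j).le)
      exact abs_of_nonneg hMnn
  rw [hα, if_pos hMne, habs, div_self hMne, Real.one_rpow]
end

section
/- Let a, b be positive real numbers with a ≠ b, set X = b − a, G = log b − log a, and θ = 1/G − a/X. Let α, c, f be real numbers with α ≥ 0 and c < 0, and assume α·(1 + f·θ)·c > 0. Then α·(1 + f·θ)·c·X·(G + f) ≥ α·c·( √(G/X)·X + √(X/G)·f )², where √ denotes the real square root (note G/X > 0). -/
/-- The unified per-pair estimate behind Cases 1 and 2 of the proof of the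
discrete entropy law (Theorem 3.2). -/
theorem entropy_per_pair_estimate
    (a b : ℝ) (ha : 0 < a) (hb : 0 < b) (hab : a ≠ b)
    (X G θ : ℝ) (hX : X = b - a) (hG : G = Real.log b - Real.log a)
    (hθ : θ = 1 / G - a / X)
    (α c f : ℝ) (hα : 0 ≤ α) (hc : c < 0)
    (hpos : 0 < α * (1 + f * θ) * c) :
    α * c * (Real.sqrt (G / X) * X + Real.sqrt (X / G) * f) ^ 2 ≤
      α * (1 + f * θ) * c * X * (G + f) := by
  -- sign facts for X and G
  have hdiv : 0 < G / X ∧ 0 < G * X := by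
    rcases lt_or_gt_of_ne hab with h | h
    · have hXp : 0 < X := by rw [hX]; linarith
      have hGp : 0 < G := by rw [hG]; have := Real.log_lt_log ha h; linarith
      exact ⟨div_pos hGp hXp, mul_pos hGp hXp⟩
    · have hXn : X < 0 := by rw [hX]; linarith
      have hGn : G < 0 := by rw [hG]; have := Real.log_lt_log hb h; linarith
      exact ⟨div_pos_iff.mpr (Or.inr ⟨hGn, hXn⟩), mul_pos_of_neg_of_neg hGn hXn⟩
  obtain ⟨hdivp, hGXp⟩ := hdiv
  have hX0 : X ≠ 0 := by intro h; rw [h, mul_zero] at hGXp; exact lt_irrefl 0 hGXp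
  have hG0 : G ≠ 0 := by intro h; rw [h, zero_mul] at hGXp; exact lt_irrefl 0 hGXp
  -- a * G < X  (logarithmic mean bound)
  have haG : a * G < X := by
    have hba : (0:ℝ) < b / a := div_pos hb ha
    have hne : b / a ≠ 1 := by
      intro h; apply hab; field_simp at h; linarith
    have hlog := Real.log_lt_sub_one_of_pos hba hne
    rw [Real.log_div (ne_of_gt hb) (ne_of_gt ha)] at hlog
    have : a * (Real.log b - Real.log a) < a * (b / a - 1) := by
      exact (mul_lt_mul_iff_right₀ ha).mpr hlog
    rw [hG, hX]
    have : a * (b / a - 1) = b - a := by field_simp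
    linarith [ (mul_lt_mul_iff_right₀ ha).mpr hlog, this ]
  -- θ > 0
  have hθpos : 0 < θ := by
    have hθeq : θ * (G * X) = X - a * G := by
      rw [hθ]; field_simp
    nlinarith
  -- G * θ < 1
  have hGθ : G * θ < 1 := by
    have h1 : G * θ = 1 - a * (G / X) := by
      rw [hθ]; field_simp
    nlinarith [mul_pos ha hdivp]
  -- α > 0
  have hαpos : 0 < α := by
    rcases hα.eq_or_lt with h | h
    · exfalso; rw [← h] at hpos; simp at hpos
    · exact h
  -- 1 + f*θ < 0
  have hfθ : 1 + f * θ < 0 := by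
    by_contra hcon
    push_neg at hcon
    have h1 : α * (1 + f * θ) * c ≤ 0 :=
      mul_nonpos_of_nonneg_of_nonpos (mul_nonneg hα hcon) hc.le
    linarith
  -- f < 0 and G + f < 0
  have hf : f < 0 := by nlinarith
  have hGf : G + f < 0 := by nlinarith
  -- expand the square
  have hsq1 : Real.sqrt (G / X) ^ 2 = G / X := Real.sq_sqrt (le_of_lt hdivp)
  have hdivp2 : 0 < X / G := by
    rw [div_pos_iff] at hdivp ⊢
    rcases hdivp with ⟨h1, h2⟩ | ⟨h1, h2⟩
    · exact Or.inl ⟨h2, h1⟩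
    · exact Or.inr ⟨h2, h1⟩
  have hsq2 : Real.sqrt (X / G) ^ 2 = X / G := Real.sq_sqrt (le_of_lt hdivp2)
  have hst : Real.sqrt (G / X) * Real.sqrt (X / G) = 1 := by
    rw [← Real.sqrt_mul (le_of_lt hdivp)]
    have : G / X * (X / G) = 1 := by field_simp
    rw [this, Real.sqrt_one]
  have hexp : (Real.sqrt (G / X) * X + Real.sqrt (X / G) * f) ^ 2
      = G * X + 2 * (X * f) + X / G * f ^ 2 := by
    have : (Real.sqrt (G / X) * X + Real.sqrt (X / G) * f) ^ 2
        = Real.sqrt (G / X) ^ 2 * X ^ 2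
          + 2 * (Real.sqrt (G / X) * Real.sqrt (X / G)) * (X * f)
          + Real.sqrt (X / G) ^ 2 * f ^ 2 := by ring
    rw [this, hsq1, hsq2, hst]
    field_simp
  rw [hexp]
  -- algebraic identity for the RHS
  have hRHS : α * (1 + f * θ) * c * X * (G + f)
      = α * c * (G * X + 2 * (X * f) + X / G * f ^ 2) - α * c * (a * f * (G + f)) := by
    rw [hθ]; field_simp; ring
  rw [hRHS]
  have hαc : α * c < 0 := mul_neg_of_pos_of_neg hαpos hc
  have hkey : 0 < a * f * (G + f) := by
    have : 0 < f * (G + f) := mul_pos_of_neg_of_neg hf hGf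
    nlinarith
  nlinarith
end
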